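/- Let G be a controllable graph on n vertices with adjacency matrix A and walk matrix W. Let Q be a rational orthogonal matrix with Qe = e such that QᵀAQ is a symmetric (0,1)-matrix with zero diagonal, and suppose the level of Q equals 2. Then there exists a (0,1)-vector u with exactly four entries equal to 1 such that uᵀAᵏu ≡ 0 (mod 4) for all k = 1, 2, …, n−1; moreover this u satisfies Wᵀu ≡ 0 (mod 2) and u ≢ 0 (mod 2). -/

import Mathlib

open Matrix

open scoped Classical in
/-- The (0,1)-adjacency matrix of a simple graph on `Fin n`, with entries in `R`. -/
noncomputable def adjMat {n : ℕ} (R : Type*) [Zero R] [One R] (G : SimpleGraph (Fin n)) :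
    Matrix (Fin n) (Fin n) R :=
  Matrix.of fun i j => if G.Adj i j then 1 else 0

/-- The walk matrix `W = [e, Ae, A²e, …, A^{n−1}e]` of a square matrix `A`,
where `e` is the all-ones vector: the `j`-th column is `A^j e`. -/
noncomputable def walkMatrix {R : Type*} [CommRing R] {n : ℕ} (A : Matrix (Fin n) (Fin n) R) :
    Matrix (Fin n) (Fin n) R :=
  Matrix.of fun i j => (A ^ (j : ℕ) *ᵥ fun _ => 1) i

/-!
Since `Q` has level 2, `N = 2Q` is an integral matrix with an odd entry; let `v` be the column
`j₀` of `N` containing it. As `B = QᵀAQ` is integral, `QᵀQ = I` gives `vᵀAᵏv = 4 (Bᵏ)_{j₀j₀}`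
(for `k = 0`: `vᵀv = 4`), and `Qe = e` gives `W_B = Qᵀ W`, hence `Wᵀv = 2 W_Bᵀ e_{j₀}`.
Four as a sum of squares with an odd summand forces `v ∈ {0, ±1}ⁿ`, so `u = v ∘ v` is a
(0,1)-vector of weight 4 with `u ≡ v (mod 2)`; since `Aᵏ` is symmetric, changing `v` by an even
vector does not change `vᵀAᵏv` modulo 4.
-/

lemma exists_sq_eq_add_two_smul {ι : Type*} (v : ι → ℤ) :
    ∃ w : ι → ℤ, (fun i => v i ^ 2) = v + 2 • w := by
  choose w hw using fun i => (Int.even_mul_pred_self (v i)).two_dvd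
  exact ⟨w, funext fun i => by simp only [Pi.add_apply, Pi.smul_apply]; linear_combination hw i⟩

section IntegerVectors

variable {ι : Type*} [Fintype ι]

lemma sq_eq_zero_or_one_of_sum_sq_eq_four [DecidableEq ι] {v : ι → ℤ} (hv : ∑ i, v i ^ 2 = 4)
    {i₀ : ι} (hodd : Odd (v i₀)) (i : ι) : v i ^ 2 = 0 ∨ v i ^ 2 = 1 := by
  have hle : ∀ s : Finset ι, ∑ j ∈ s, v j ^ 2 ≤ 4 := fun s =>
    hv ▸ Finset.sum_le_sum_of_subset_of_nonneg (Finset.subset_univ s) fun j _ _ => sq_nonneg _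
  obtain ⟨m, hm⟩ := hodd.pow (n := 2)
  have hlt : v i ^ 2 < 4 := by
    by_cases hi : i = i₀
    · subst hi
      have := hle {i}
      rw [Finset.sum_singleton] at this
      omega
    · have := hle {i, i₀}
      rw [Finset.sum_pair hi] at this
      have := sq_nonneg (v i₀)
      omega
  have : v i ≤ 1 := by nlinarith
  have : -1 ≤ v i := by nlinarith
  have : v i ^ 2 ≤ 1 := by nlinarith
  have := sq_nonneg (v i)
  omega

lemma card_filter_eq_one_eq_sum {u : ι → ℤ} (hu : ∀ i, u i = 0 ∨ u i = 1) :
    ((Finset.univ.filter fun i => u i = 1).card : ℤ) = ∑ i, u i := by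
  rw [← Finset.sum_boole]
  refine Finset.sum_congr rfl fun i _ => ?_
  rcases hu i with h | h <;> simp [h]

lemma dotProduct_mulVec_add_two_smul_modEq {M : Matrix ι ι ℤ} (hM : M.IsSymm) (v w : ι → ℤ) :
    (v + 2 • w) ⬝ᵥ M *ᵥ (v + 2 • w) ≡ v ⬝ᵥ M *ᵥ v [ZMOD 4] := by
  have hsymm : v ⬝ᵥ M *ᵥ w = w ⬝ᵥ M *ᵥ v := by
    rw [dotProduct_mulVec, ← mulVec_transpose, hM.eq, dotProduct_comm]
  have hexpand : (v + 2 • w) ⬝ᵥ M *ᵥ (v + 2 • w) =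
      v ⬝ᵥ M *ᵥ v + 4 * (w ⬝ᵥ M *ᵥ v + w ⬝ᵥ M *ᵥ w) := by
    simp only [mulVec_add, mulVec_smul, dotProduct_add, add_dotProduct, dotProduct_smul,
      smul_dotProduct, hsymm]
    ring
  rw [hexpand]
  exact Int.modEq_add_fac_self

end IntegerVectors

namespace Matrix

variable {ι : Type*} [Fintype ι]

lemma transpose_mul_mul_apply_diag {R : Type*} [CommRing R] (N M : Matrix ι ι R) (j : ι) :
    (Nᵀ * M * N) j j = Nᵀ j ⬝ᵥ M *ᵥ Nᵀ j := by
  rw [dotProduct_mulVec]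
  rfl

lemma transpose_mul_pow_mul [DecidableEq ι] {R : Type*} [CommRing R] {Q : Matrix ι ι R}
    (hQ : Qᵀ * Q = 1) (A : Matrix ι ι R) (k : ℕ) : Qᵀ * A ^ k * Q = (Qᵀ * A * Q) ^ k := by
  have hsemiconj : SemiconjBy Qᵀ A (Qᵀ * A * Q) := by
    rw [SemiconjBy, Matrix.mul_assoc _ Q, mul_eq_one_comm.mp hQ, Matrix.mul_one]
  rw [(hsemiconj.pow_right k).eq, Matrix.mul_assoc, hQ, Matrix.mul_one]

lemma exists_map_intCast_eq {m n : Type*} {M : Matrix m n ℚ} (h : ∀ i j, ∃ z : ℤ, M i j = z) :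
    ∃ MZ : Matrix m n ℤ, MZ.map (↑) = M := by
  choose MZ hMZ using h
  exact ⟨of MZ, ext fun i j => (hMZ i j).symm⟩

lemma exists_odd_of_map_eq_two_smul {m n : Type*} {Q : Matrix m n ℚ} {N : Matrix m n ℤ}
    (hN : N.map (↑) = (2 : ℚ) • Q) (hQ : ¬ ∀ i j, ∃ z : ℤ, Q i j = z) : ∃ i j, Odd (N i j) := by
  contrapose! hQ
  intro i j
  obtain ⟨z, hz⟩ := Int.not_odd_iff_even.mp (hQ i j)
  refine ⟨z, ?_⟩
  have := congrFun (congrFun hN i) j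
  simp only [map_apply, hz, smul_apply, smul_eq_mul] at this
  push_cast at this
  linarith

lemma transpose_mul_pow_mul_eq_four_smul [DecidableEq ι] {Q : Matrix ι ι ℚ} (hQ : Qᵀ * Q = 1)
    {N AZ BZ : Matrix ι ι ℤ} (hN : N.map (↑) = (2 : ℚ) • Q)
    (hB : BZ.map (↑) = Qᵀ * AZ.map (↑) * Q) (k : ℕ) :
    Nᵀ * AZ ^ k * N = (4 : ℤ) • BZ ^ k := by
  apply map_injective (f := Int.castRingHom ℚ) Int.cast_injective
  dsimp only
  rw [Matrix.map_mul, Matrix.map_mul, Matrix.map_pow, map_smul' _ _ _ (map_mul _), Matrix.map_pow,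
    transpose_map]
  simp only [Int.coe_castRingHom, hN, hB, ← transpose_mul_pow_mul hQ, transpose_smul,
    Matrix.smul_mul, Matrix.mul_smul, smul_smul]
  norm_num

end Matrix

lemma adjMat_map_intCast {n : ℕ} {R : Type*} [AddGroupWithOne R] (G : SimpleGraph (Fin n)) :
    (adjMat ℤ G).map (Int.cast : ℤ → R) = adjMat R G := by
  ext i j
  simp [adjMat, apply_ite (Int.cast : ℤ → R)]

lemma adjMat_isSymm {n : ℕ} (R : Type*) [Zero R] [One R] (G : SimpleGraph (Fin n)) :
    (adjMat R G).IsSymm := by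
  classical
  ext i j
  exact if_congr (G.adj_comm j i) rfl rfl

section WalkMatrix

variable {R S : Type*} [CommRing R] [CommRing S] {n : ℕ}

lemma walkMatrix_map (A : Matrix (Fin n) (Fin n) R) (f : R →+* S) :
    (walkMatrix A).map f = walkMatrix (A.map f) := by
  ext i j
  simp [walkMatrix, RingHom.map_mulVec, ← Matrix.map_pow, Function.comp_def]

lemma walkMatrix_transpose_mul_mul {Q : Matrix (Fin n) (Fin n) R} (hQ : Qᵀ * Q = 1)
    (hQe : Q *ᵥ (fun _ => 1) = fun _ => 1) (A : Matrix (Fin n) (Fin n) R) :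
    walkMatrix (Qᵀ * A * Q) = Qᵀ * walkMatrix A := by
  ext i j
  rw [walkMatrix, of_apply, ← transpose_mul_pow_mul hQ, ← mulVec_mulVec, hQe, ← mulVec_mulVec]
  rfl

lemma walkMatrix_transpose_mul_eq_two_smul {Q : Matrix (Fin n) (Fin n) ℚ} (hQ : Qᵀ * Q = 1)
    (hQe : Q *ᵥ (fun _ => 1) = fun _ => 1) {N AZ BZ : Matrix (Fin n) (Fin n) ℤ}
    (hN : N.map (↑) = (2 : ℚ) • Q) (hB : BZ.map (↑) = Qᵀ * AZ.map (↑) * Q) :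
    (walkMatrix AZ)ᵀ * N = (2 : ℤ) • (walkMatrix BZ)ᵀ := by
  apply map_injective (f := Int.castRingHom ℚ) Int.cast_injective
  dsimp only
  rw [Matrix.map_mul, transpose_map, walkMatrix_map, map_smul' _ _ _ (map_mul _), transpose_map,
    walkMatrix_map]
  simp only [Int.coe_castRingHom, hN, hB, walkMatrix_transpose_mul_mul hQ hQe]
  rw [transpose_mul, transpose_transpose, Matrix.mul_smul]
  norm_num

end WalkMatrix

theorem stmt_16_general {n : ℕ} (G : SimpleGraph (Fin n))
    (A : Matrix (Fin n) (Fin n) ℚ) (hA : A = adjMat ℚ G)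
    (AZ : Matrix (Fin n) (Fin n) ℤ) (hAZ : AZ = adjMat ℤ G)
    (W : Matrix (Fin n) (Fin n) ℤ) (hW : W = walkMatrix AZ)
    (Q : Matrix (Fin n) (Fin n) ℚ)
    (hQorth : Qᵀ * Q = 1) (hQe : Q *ᵥ (fun _ => 1) = fun _ => 1)
    (h01 : ∀ i j, (Qᵀ * A * Q) i j = 0 ∨ (Qᵀ * A * Q) i j = 1)
    (hlevel : IsLeast {m : ℕ | 0 < m ∧ ∀ i j, ∃ z : ℤ, (m : ℚ) * Q i j = (z : ℚ)} 2) :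
    ∃ u : Fin n → ℤ,
      (∀ i, u i = 0 ∨ u i = 1) ∧
      (Finset.univ.filter fun i => u i = 1).card = 4 ∧
      (∀ k : ℕ, 1 ≤ k → k ≤ n - 1 → (4 : ℤ) ∣ u ⬝ᵥ ((AZ ^ k) *ᵥ u)) ∧
      (∀ i, (2 : ℤ) ∣ (Wᵀ *ᵥ u) i) ∧
      ¬(∀ i, (2 : ℤ) ∣ u i) := by
  subst hAZ hW
  rw [hA, ← adjMat_map_intCast] at h01
  obtain ⟨BZ, hB⟩ := exists_map_intCast_eq (M := Qᵀ * (adjMat ℤ G).map (↑) * Q) fun i j =>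
    (h01 i j).elim (fun h => ⟨0, by simp [h]⟩) fun h => ⟨1, by simp [h]⟩
  obtain ⟨N, hN⟩ := exists_map_intCast_eq (M := (2 : ℚ) • Q) (by simpa using hlevel.1.2)
  obtain ⟨i₀, j₀, hodd⟩ := exists_odd_of_map_eq_two_smul hN fun hQ =>
    absurd (hlevel.2 ⟨one_pos, by simpa using hQ⟩) (by norm_num)
  set v := Nᵀ j₀
  have hquad (k : ℕ) : v ⬝ᵥ adjMat ℤ G ^ k *ᵥ v = 4 * (BZ ^ k) j₀ j₀ := by
    rw [← transpose_mul_mul_apply_diag, transpose_mul_pow_mul_eq_four_smul hQorth hN hB]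
    rfl
  have hsum : ∑ i, v i ^ 2 = 4 := by simpa [dotProduct, sq] using hquad 0
  have hu := sq_eq_zero_or_one_of_sum_sq_eq_four hsum hodd
  obtain ⟨w, hw⟩ := exists_sq_eq_add_two_smul v
  refine ⟨fun i => v i ^ 2, hu, ?_, fun k _ _ => ?_, fun i => ?_, fun h => ?_⟩
  · exact_mod_cast (card_filter_eq_one_eq_sum hu).trans hsum
  · rw [hw, ← Int.modEq_zero_iff_dvd]
    exact (dotProduct_mulVec_add_two_smul_modEq ((adjMat_isSymm ℤ G).pow k) v w).trans
      (Int.modEq_zero_iff_dvd.mpr ⟨_, hquad k⟩)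
  · have hwalk : ((walkMatrix (adjMat ℤ G))ᵀ *ᵥ v) i = 2 * walkMatrix BZ j₀ i :=
      congrFun (congrFun (walkMatrix_transpose_mul_eq_two_smul hQorth hQe hN hB) i) j₀
    rw [hw, mulVec_add, mulVec_smul, Pi.add_apply, Pi.smul_apply, nsmul_eq_mul, Nat.cast_ofNat,
      hwalk]
    exact dvd_add (dvd_mul_right _ _) (dvd_mul_right _ _)
  · exact Int.not_even_iff_odd.mpr hodd.pow (even_iff_two_dvd.mpr (h i₀))

/-- **Lemma 4.4.** If `Q ∈ 𝒬_G` has level `ℓ = 2`, then there is a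
(0,1)-vector `u` with exactly four entries equal to `1` such that
`uᵀAᵏu ≡ 0 (mod 4)` for `k = 1, …, n − 1`; moreover `Wᵀu ≡ 0` and `u ≢ 0 (mod 2)`. -/
theorem stmt_16 {n : ℕ} (G : SimpleGraph (Fin n))
    (A : Matrix (Fin n) (Fin n) ℚ) (hA : A = adjMat ℚ G)
    (AZ : Matrix (Fin n) (Fin n) ℤ) (hAZ : AZ = adjMat ℤ G)
    (W : Matrix (Fin n) (Fin n) ℤ) (hW : W = walkMatrix AZ)
    (hctrl : W.det ≠ 0)
    (Q : Matrix (Fin n) (Fin n) ℚ)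
    (hQorth : Qᵀ * Q = 1) (hQe : Q *ᵥ (fun _ => 1) = fun _ => 1)
    (hsymm : (Qᵀ * A * Q).IsSymm)
    (h01 : ∀ i j, (Qᵀ * A * Q) i j = 0 ∨ (Qᵀ * A * Q) i j = 1)
    (hdiag : ∀ i, (Qᵀ * A * Q) i i = 0)
    (hlevel : IsLeast {m : ℕ | 0 < m ∧ ∀ i j, ∃ z : ℤ, (m : ℚ) * Q i j = (z : ℚ)} 2) :
    ∃ u : Fin n → ℤ,
      (∀ i, u i = 0 ∨ u i = 1) ∧
      (Finset.univ.filter fun i => u i = 1).card = 4 ∧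
      (∀ k : ℕ, 1 ≤ k → k ≤ n - 1 → (4 : ℤ) ∣ u ⬝ᵥ ((AZ ^ k) *ᵥ u)) ∧
      (∀ i, (2 : ℤ) ∣ (Wᵀ *ᵥ u) i) ∧
      ¬(∀ i, (2 : ℤ) ∣ u i) :=
  stmt_16_general G A hA AZ hAZ W hW Q hQorth hQe h01 hlevel
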